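/- The complex conjugate almost character R̄_{x₁} satisfies R̄_{x₁} = (2/3)ρ_{x₂} − (1/3)ρ_{x₁} + Σ_{x ∈ X̄(W,σ)\{x₁,x₂}} {x, x₁} ρ̄_x, where ρ̄_{x₁} = ρ_{x₂} (the complex conjugate of the cuspidal unipotent character E₆[θ] resp. ²E₆[θ] is E₆[θ²] resp. ²E₆[θ²]), and evaluating at u₀ using that u₀ is G^F-conjugate to u₀⁻¹ and that {x, x₁} = {x, x₂} for x ≠ x₁, x₂ yields R_{x₁}(u₀) = R_{x₂}(u₀). -/
import Mathlib


/-!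
Setting: `GF` is the finite group G^F for a simple, simply connected
algebraic group G of type E₆ over an algebraic closure of 𝔽₃, defined over
𝔽_q (q = 3^f) with Frobenius F and Weyl group automorphism σ.
* `XBar` is Lusztig's parameter set X̄(W,σ) for the unipotent characters
  `ρ x` of G^F, with pairing `br x y = {x, y}` (with rational values) and
  signs `Δ x`;
* `R x = Σ_{x'} {x', x} Δ(x') ρ_{x'}` are the unipotent almost characters;
* `x1, x2` label the cuspidal unipotent characters E₆[θ], E₆[θ²]
  (resp. ²E₆[θ], ²E₆[θ²] in the twisted case), θ a primitive third root of
  unity; their complex conjugates satisfy ρ̄_{x₁} = ρ_{x₂};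
* {x₁,x₁} = {x₂,x₂} = 2/3, {x₁,x₂} = {x₂,x₁} = −1/3, Δ(x₁) = Δ(x₂) = 1,
  and {x, x₁} = {x, x₂} for x ≠ x₁, x₂;
* `u₀ ∈ O_reg^F` is the chosen rational regular unipotent element, which is
  conjugate in G^F to its inverse.

Statement: R̄_{x₁} = (2/3)ρ_{x₂} − (1/3)ρ_{x₁} + Σ_{x ≠ x₁,x₂} {x,x₁} ρ̄_x,
and evaluating at u₀ yields R_{x₁}(u₀) = R_{x₂}(u₀).
-/

theorem statement8
    (GF : Type) [Group GF] [Fintype GF]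
    (XBar : Type) [Fintype XBar] [DecidableEq XBar]
    (x1 x2 : XBar) (hx12 : x1 ≠ x2)
    (ρ : XBar → GF → ℂ)
    (br : XBar → XBar → ℂ)
    (Δ : XBar → ℂ)
    (R : XBar → GF → ℂ)
    (hR : ∀ x g, R x g = ∑ x' : XBar, br x' x * Δ x' * ρ x' g)
    (hΔsign : ∀ x, Δ x = 1 ∨ Δ x = -1)
    (hΔ : ∀ x, br x x1 ≠ 0 → Δ x = 1)
    (h11 : br x1 x1 = 2 / 3) (h22 : br x2 x2 = 2 / 3)
    (h12 : br x1 x2 = -(1 / 3)) (h21 : br x2 x1 = -(1 / 3))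
    (hbrreal : ∀ x y, (starRingEnd ℂ) (br x y) = br x y)
    (hsym : ∀ x, x ≠ x1 → x ≠ x2 → br x x1 = br x x2)
    (hclass : ∀ x g h, ρ x (h * g * h⁻¹) = ρ x g)
    (hcharconj : ∀ x g, (starRingEnd ℂ) (ρ x g) = ρ x g⁻¹)
    (hconj12 : ∀ g, (starRingEnd ℂ) (ρ x1 g) = ρ x2 g)
    (u₀ : GF)
    (hu₀conj : ∃ h : GF, h * u₀ * h⁻¹ = u₀⁻¹) :
    (∀ g, (starRingEnd ℂ) (R x1 g) =
        2 / 3 * ρ x2 g - 1 / 3 * ρ x1 g +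
          ∑ x ∈ (Finset.univ.erase x1).erase x2, br x x1 * (starRingEnd ℂ) (ρ x g)) ∧
    R x1 u₀ = R x2 u₀ := by

  classical
  have hx21 : x2 ≠ x1 := hx12.symm
  have hsplit : ∀ f : XBar → ℂ, ∑ x, f x =
      f x1 + f x2 + ∑ x ∈ (Finset.univ.erase x1).erase x2, f x := by
    intro f
    rw [← Finset.sum_erase_add Finset.univ f (Finset.mem_univ x1),
      ← Finset.sum_erase_add (Finset.univ.erase x1) f
        (Finset.mem_erase.mpr ⟨hx21, Finset.mem_univ x2⟩)]
    ring
  have hΔ1 : Δ x1 = 1 := hΔ x1 (by rw [h11]; norm_num)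
  have hΔ2 : Δ x2 = 1 := hΔ x2 (by rw [h21]; norm_num)
  have hΔreal : ∀ x, (starRingEnd ℂ) (Δ x) = Δ x := by
    intro x; rcases hΔsign x with h | h <;> rw [h] <;> simp
  have hconj21 : ∀ g, (starRingEnd ℂ) (ρ x2 g) = ρ x1 g := by
    intro g; rw [← hconj12 g, Complex.conj_conj]
  have key : ∀ g, (starRingEnd ℂ) (R x1 g) =
      2 / 3 * ρ x2 g - 1 / 3 * ρ x1 g +
        ∑ x ∈ (Finset.univ.erase x1).erase x2, br x x1 * (starRingEnd ℂ) (ρ x g) := by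
    intro g
    rw [hR, map_sum]
    simp only [map_mul, hbrreal, hΔreal]
    rw [hsplit (fun x' => br x' x1 * Δ x' * (starRingEnd ℂ) (ρ x' g))]
    rw [Finset.sum_congr rfl (fun x _ => by
      by_cases hb : br x x1 = 0
      · rw [hb]; ring
      · rw [hΔ x hb]; ring :
      ∀ x ∈ (Finset.univ.erase x1).erase x2,
        br x x1 * Δ x * (starRingEnd ℂ) (ρ x g) = br x x1 * (starRingEnd ℂ) (ρ x g))]
    rw [h11, h21, hΔ1, hΔ2, hconj12, hconj21]
    ring
  refine ⟨key, ?_⟩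
  obtain ⟨h, hh⟩ := hu₀conj
  have hρreal : ∀ x, (starRingEnd ℂ) (ρ x u₀) = ρ x u₀ := by
    intro x; rw [hcharconj, ← hh, hclass]
  have hRreal : (starRingEnd ℂ) (R x1 u₀) = R x1 u₀ := by
    rw [hR, map_sum]; simp only [map_mul, hbrreal, hΔreal, hρreal]
  have hRx2 : R x2 u₀ =
      2 / 3 * ρ x2 u₀ - 1 / 3 * ρ x1 u₀ +
        ∑ x ∈ (Finset.univ.erase x1).erase x2, br x x1 * ρ x u₀ := by
    rw [hR, hsplit (fun x' => br x' x2 * Δ x' * ρ x' u₀)]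
    rw [Finset.sum_congr rfl (fun x hx => by
      have hx' := Finset.mem_erase.mp hx
      have hx'' := Finset.mem_erase.mp hx'.2
      rw [← hsym x hx''.1 hx'.1]
      by_cases hb : br x x1 = 0
      · rw [hb]; ring
      · rw [hΔ x hb]; ring :
      ∀ x ∈ (Finset.univ.erase x1).erase x2,
        br x x2 * Δ x * ρ x u₀ = br x x1 * ρ x u₀)]
    rw [h12, h22, hΔ1, hΔ2]
    ring
  have := key u₀
  rw [hRreal] at this
  rw [this, hRx2]
  congr 1
  exact Finset.sum_congr rfl fun x _ => by rw [hρreal]
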